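/- There exists a constant C > 0 such that the following holds. Consider the process Boot3(t) on Q_{2,n} with base threshold ⌈N/2⌉ (where N = n + C(n,2)) and t = 10n, where each vertex is initially infected independently with probability p = 1/2 − C·√(log n)/n. Then P(A_3 = A_2) → 1 as n → ∞. -/

import Mathlib

/-!
If `A₃ ≠ A₂` then `A₂ ≠ A₁`, since the thresholds only increase; so some vertex `d` joins at
step 2 although fewer than `r - 2t` of its neighbours lie in `A₀`. Hence `d` has a set `S` of
`t` neighbours that joined at step 1, each with at least `r - 2t` neighbours in `A₀`. For a fixed
`S` this forces `∑_{u ∈ A₀} |S ∩ N(u)| ≥ t (r - 2t)`, which exceeds its mean by order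
`n² √(log n)`. Two distinct vertices of `Q_{2,n}` have `O(n)` common neighbours, so
`∑_u |S ∩ N(u)|² = O(n³)`, and Hoeffding's inequality bounds the probability by
`exp (-50 n log n)`. A union bound over the `2ⁿ` choices of `d` and at most `n^{20n}` choices
of `S` finishes the proof.
-/

open Finset Filter
open scoped Classical

noncomputable section

/-- The infected set after `i` steps of `r`-neighbour bootstrap percolation on the graph `G`,
starting from the initial infected set `A0`:
`A_{i+1} = A_i ∪ {v : |N(v) ∩ A_i| ≥ r}`. -/
def bootSets {V : Type*} [Fintype V] [DecidableEq V] (G : SimpleGraph V) (r : ℕ)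
    (A0 : Finset V) : ℕ → Finset V
  | 0 => A0
  | i + 1 =>
      bootSets G r A0 i ∪
        Finset.univ.filter fun v => r ≤ (G.neighborFinset v ∩ bootSets G r A0 i).card

/-- `A0` percolates under the `r`-neighbour bootstrap process on `G`. -/
def percolates {V : Type*} [Fintype V] [DecidableEq V] (G : SimpleGraph V) (r : ℕ)
    (A0 : Finset V) : Prop :=
  ∃ i, bootSets G r A0 i = Finset.univ

/-- The probability that the initial infected set is exactly `A`, when every vertex is
infected independently with probability `p`. -/
def configProb {V : Type*} [Fintype V] [DecidableEq V] (p : ℝ) (A : Finset V) : ℝ :=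
  p ^ A.card * (1 - p) ^ (Fintype.card V - A.card)

/-- The probability of the event `E` about the initial infected set, when every vertex is
infected independently with probability `p`. -/
def probEvent {V : Type*} [Fintype V] [DecidableEq V] (p : ℝ) (E : Finset V → Prop) : ℝ :=
  ∑ A : Finset V, if E A then configProb p A else 0

/-- The generalized hypercube `Q_{k,n}`: vertices are `{0,1}^n`, two vertices being adjacent
iff their Hamming distance is between `1` and `k`.  The usual hypercube `Q_n` is
`cubeGraph n 1`. -/
def cubeGraph (n k : ℕ) : SimpleGraph (Fin n → Bool) where
  Adj x y := 1 ≤ hammingDist x y ∧ hammingDist x y ≤ k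
  symm := by
    constructor
    intro x y h
    rwa [hammingDist_comm]
  loopless := by
    constructor
    intro x h
    simp [hammingDist_self] at h

/-- The critical probability for `r`-neighbour bootstrap percolation on `Q_{k,n}` where every
vertex is initially infected independently with probability `p`:
the supremum of all `p ∈ (0,1)` for which percolation has probability at most `1/2`. -/
def critProb (n k r : ℕ) : ℝ :=
  sSup {p : ℝ | p ∈ Set.Ioo (0 : ℝ) 1 ∧
    probEvent p (fun A0 => percolates (cubeGraph n k) r A0) ≤ 1 / 2}

/-- The `Boot1(t)` process with base threshold `r`: at step `1` the threshold is `r - t`,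
afterwards it is `r`. -/
def boot1Sets {V : Type*} [Fintype V] [DecidableEq V] (G : SimpleGraph V) (r t : ℕ)
    (A0 : Finset V) : ℕ → Finset V
  | 0 => A0
  | 1 => A0 ∪ Finset.univ.filter fun v => r - t ≤ (G.neighborFinset v ∩ A0).card
  | i + 2 =>
      boot1Sets G r t A0 (i + 1) ∪
        Finset.univ.filter fun v =>
          r ≤ (G.neighborFinset v ∩ boot1Sets G r t A0 (i + 1)).card

/-- The `Boot2(t)` (= `Boot3(t)`) process with base threshold `r`: at step `1` the threshold
is `r - 2t`, at step `2` it is `r - t`, and afterwards it is `r`. -/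
def boot2Sets {V : Type*} [Fintype V] [DecidableEq V] (G : SimpleGraph V) (r t : ℕ)
    (A0 : Finset V) : ℕ → Finset V
  | 0 => A0
  | 1 => A0 ∪ Finset.univ.filter fun v => r - 2 * t ≤ (G.neighborFinset v ∩ A0).card
  | 2 =>
      boot2Sets G r t A0 1 ∪
        Finset.univ.filter fun v =>
          r - t ≤ (G.neighborFinset v ∩ boot2Sets G r t A0 1).card
  | i + 3 =>
      boot2Sets G r t A0 (i + 2) ∪
        Finset.univ.filter fun v =>
          r ≤ (G.neighborFinset v ∩ boot2Sets G r t A0 (i + 2)).card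

open ProbabilityTheory MeasureTheory in
theorem one_sub_add_mul_exp_le {p : ℝ} (h0 : 0 ≤ p) (h1 : p ≤ 1) (x : ℝ) :
    1 - p + p * Real.exp x ≤ Real.exp (p * x + x ^ 2 / 8) := by
  let μ : Measure ℝ := bernoulliMeasure (1 - p) (-p) ⟨p, h0, h1⟩
  have hX : HasSubgaussianMGF id ((‖(1 - p) - (-p)‖₊ / 2) ^ 2) μ := by
    refine hasSubgaussianMGF_of_mem_Icc_of_integral_eq_zero aemeasurable_id ?_ ?_
    · rw [ae_iff]
      exact bernoulliMeasure_apply_of_notMem_of_notMem _ measurableSet_Icc.compl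
        (by simp) (by simp)
    · rw [integral_bernoulliMeasure]; simp; ring
  have hmgf :
      p * Real.exp (x * (1 - p)) + (1 - p) * Real.exp (x * -p) ≤ Real.exp (x ^ 2 / 8) := by
    convert hX.mgf_le x using 1
    · rw [mgf, integral_bernoulliMeasure]; simp
    · norm_num; ring_nf
  have e1 : Real.exp (p * x) * Real.exp (x * (1 - p)) = Real.exp x := by
    rw [← Real.exp_add]; ring_nf
  have e2 : Real.exp (p * x) * Real.exp (x * -p) = 1 := by
    rw [← Real.exp_add, ← Real.exp_zero]; ring_nf
  calc 1 - p + p * Real.exp x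
      = Real.exp (p * x) * (p * Real.exp (x * (1 - p)) + (1 - p) * Real.exp (x * -p)) := by
        linear_combination -p * e1 - (1 - p) * e2
    _ ≤ Real.exp (p * x) * Real.exp (x ^ 2 / 8) := by gcongr
    _ = Real.exp (p * x + x ^ 2 / 8) := by rw [Real.exp_add]

section ProductMeasure

variable {V : Type*} [Fintype V] [DecidableEq V] {p : ℝ}

theorem sum_prod_mul_configProb (p : ℝ) (f : V → ℝ) :
    ∑ A : Finset V, (∏ u ∈ A, f u) * configProb p A = ∏ u, (1 - p + p * f u) := by
  simp_rw [add_comm (1 - p), prod_add, powerset_univ]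
  refine sum_congr rfl fun A _ => ?_
  rw [configProb, prod_mul_distrib, prod_const, prod_const, card_sdiff_of_subset (subset_univ _),
    card_univ]
  ring

theorem sum_configProb (p : ℝ) : ∑ A : Finset V, configProb p A = 1 := by
  simpa using sum_prod_mul_configProb (V := V) p 1

theorem configProb_nonneg (h0 : 0 ≤ p) (h1 : p ≤ 1) (A : Finset V) : 0 ≤ configProb p A :=
  mul_nonneg (pow_nonneg h0 _) (pow_nonneg (sub_nonneg.2 h1) _)

theorem probEvent_nonneg (h0 : 0 ≤ p) (h1 : p ≤ 1) (E : Finset V → Prop) :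
    0 ≤ probEvent p E :=
  sum_nonneg fun A _ => by split_ifs <;> simp [configProb_nonneg h0 h1]

theorem probEvent_not (p : ℝ) (E : Finset V → Prop) :
    probEvent p (fun A => ¬ E A) = 1 - probEvent p E := by
  rw [← sum_configProb (V := V) p, probEvent, probEvent, eq_sub_iff_add_eq, ← sum_add_distrib]
  exact sum_congr rfl fun A _ => by split_ifs <;> simp_all

theorem probEvent_mono (h0 : 0 ≤ p) (h1 : p ≤ 1) {E F : Finset V → Prop}
    (h : ∀ A, E A → F A) : probEvent p E ≤ probEvent p F :=
  sum_le_sum fun A _ => by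
    split_ifs with hE hF <;> simp_all [configProb_nonneg h0 h1]

theorem probEvent_exists_le_sum {ι : Type*} (h0 : 0 ≤ p) (h1 : p ≤ 1) (s : Finset ι)
    (E : ι → Finset V → Prop) :
    probEvent p (fun A => ∃ i ∈ s, E i A) ≤ ∑ i ∈ s, probEvent p (E i) := by
  have hterm : ∀ i A, 0 ≤ if E i A then configProb p A else 0 := fun i A => by
    split_ifs <;> simp [configProb_nonneg h0 h1]
  simp only [probEvent]
  rw [sum_comm]
  refine sum_le_sum fun A _ => ?_
  split_ifs with h
  · obtain ⟨i, hi, hEi⟩ := h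
    simpa [hEi] using single_le_sum (fun j _ => hterm j A) hi
  · exact sum_nonneg fun i _ => hterm i A

theorem probEvent_exists_le_card_mul {ι : Type*} (h0 : 0 ≤ p) (h1 : p ≤ 1) (s : Finset ι)
    (E : ι → Finset V → Prop) {b : ℝ} (hb : ∀ i ∈ s, probEvent p (E i) ≤ b) :
    probEvent p (fun A => ∃ i ∈ s, E i A) ≤ #s * b :=
  (probEvent_exists_le_sum h0 h1 s E).trans <| by
    simpa using sum_le_sum hb

theorem probEvent_le_exp_mul_prod (h0 : 0 ≤ p) (h1 : p ≤ 1) (c : V → ℝ) (b : ℝ) :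
    probEvent p (fun A => b ≤ ∑ u ∈ A, c u)
      ≤ Real.exp (-b) * ∏ u, (1 - p + p * Real.exp (c u)) := by
  rw [← sum_prod_mul_configProb, mul_sum]
  refine sum_le_sum fun A _ => ?_
  have hA := configProb_nonneg h0 h1 A
  rw [← Real.exp_sum, ← mul_assoc, ← Real.exp_add]
  split_ifs with h
  · exact le_mul_of_one_le_left hA (Real.one_le_exp (by linarith))
  · positivity

theorem probEvent_hoeffding (h0 : 0 ≤ p) (h1 : p ≤ 1) (c : V → ℝ) {D B : ℝ} (hD : 0 < D)
    (hB : 0 < B) (hcB : ∑ u, c u ^ 2 ≤ B) :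
    probEvent p (fun A => p * ∑ u, c u + D ≤ ∑ u ∈ A, c u) ≤ Real.exp (-(2 * D ^ 2 / B)) := by
  -- `l` minimises `-l * D + l ^ 2 * B / 8`
  set l := 4 * D / B with hl_def
  have hl : 0 < l := by positivity
  calc probEvent p (fun A => p * ∑ u, c u + D ≤ ∑ u ∈ A, c u)
      ≤ probEvent p (fun A => l * (p * ∑ u, c u + D) ≤ ∑ u ∈ A, l * c u) :=
        probEvent_mono h0 h1 fun A h => by rw [← mul_sum]; gcongr
    _ ≤ Real.exp (-(l * (p * ∑ u, c u + D))) * ∏ u, (1 - p + p * Real.exp (l * c u)) :=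
        probEvent_le_exp_mul_prod h0 h1 _ _
    _ ≤ Real.exp (-(l * (p * ∑ u, c u + D)))
          * ∏ u, Real.exp (p * (l * c u) + (l * c u) ^ 2 / 8) := by
        gcongr with u
        exact one_sub_add_mul_exp_le h0 h1 _
    _ = Real.exp (-(l * D) + l ^ 2 / 8 * ∑ u, c u ^ 2) := by
        rw [← Real.exp_sum, ← Real.exp_add]
        congr 1
        simp only [sum_add_distrib, ← mul_sum, ← sum_div, mul_pow]
        ring
    _ ≤ Real.exp (-(l * D) + l ^ 2 / 8 * B) := by gcongr
    _ = Real.exp (-(2 * D ^ 2 / B)) := by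
        rw [hl_def]; congr 1
        field_simp
        ring

end ProductMeasure

section Bootstrap

variable {V : Type*} [Fintype V] [DecidableEq V] (G : SimpleGraph V)

theorem neighborFinset_inter_eq_bipartiteAbove (w : V) (A : Finset V) :
    G.neighborFinset w ∩ A = A.bipartiteAbove G.Adj w := by
  ext u; simp [and_comm]

theorem inter_neighborFinset_eq_bipartiteBelow (S : Finset V) (u : V) :
    S ∩ G.neighborFinset u = S.bipartiteBelow G.Adj u := by
  ext w; simp [G.adj_comm]

theorem sum_card_neighborFinset_inter (S A : Finset V) :
    ∑ w ∈ S, #(G.neighborFinset w ∩ A) = ∑ u ∈ A, #(S ∩ G.neighborFinset u) := by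
  simp_rw [neighborFinset_inter_eq_bipartiteAbove, inter_neighborFinset_eq_bipartiteBelow]
  exact sum_card_bipartiteAbove_eq_sum_card_bipartiteBelow _

theorem sum_card_inter_neighborFinset_sq (S : Finset V) :
    ∑ u, #(S ∩ G.neighborFinset u) ^ 2
      = ∑ w ∈ S, ∑ w' ∈ S, #(G.neighborFinset w ∩ G.neighborFinset w') := by
  let R : V × V → V → Prop := fun ww u => G.Adj ww.1 u ∧ G.Adj ww.2 u
  calc ∑ u, #(S ∩ G.neighborFinset u) ^ 2 = ∑ u, #((S ×ˢ S).bipartiteBelow R u) := by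
        refine sum_congr rfl fun u _ => ?_
        rw [sq, ← card_product]
        congr 1; ext ⟨w, w'⟩; simp [R, G.adj_comm]; tauto
    _ = ∑ ww ∈ S ×ˢ S, #(univ.bipartiteAbove R ww) :=
        (sum_card_bipartiteAbove_eq_sum_card_bipartiteBelow R).symm
    _ = ∑ w ∈ S, ∑ w' ∈ S, #(G.neighborFinset w ∩ G.neighborFinset w') := by
        rw [sum_product]
        refine sum_congr rfl fun w _ => sum_congr rfl fun w' _ => ?_
        congr 1; ext u; simp [R]

variable {G} {r t : ℕ} {A0 : Finset V}

theorem boot2Sets_one : boot2Sets G r t A0 1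
    = A0 ∪ univ.filter fun v => r - 2 * t ≤ #(G.neighborFinset v ∩ A0) := rfl

theorem boot2Sets_two : boot2Sets G r t A0 2 = boot2Sets G r t A0 1
    ∪ univ.filter fun v => r - t ≤ #(G.neighborFinset v ∩ boot2Sets G r t A0 1) := rfl

theorem boot2Sets_three : boot2Sets G r t A0 3 = boot2Sets G r t A0 2
    ∪ univ.filter fun v => r ≤ #(G.neighborFinset v ∩ boot2Sets G r t A0 2) := rfl

theorem boot2Sets_two_ne_one_of_three_ne
    (h : boot2Sets G r t A0 3 ≠ boot2Sets G r t A0 2) :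
    boot2Sets G r t A0 2 ≠ boot2Sets G r t A0 1 := by
  intro h21
  refine h ?_
  rw [boot2Sets_three, union_eq_left]
  intro v hv
  rw [mem_filter, h21] at hv
  rw [boot2Sets_two]
  exact mem_union_right _ (mem_filter.2 ⟨mem_univ v, (Nat.sub_le r t).trans hv.2⟩)

theorem exists_subset_neighborFinset_of_boot2Sets_two_ne
    (h : boot2Sets G r t A0 2 ≠ boot2Sets G r t A0 1) :
    ∃ d, ∃ S ⊆ G.neighborFinset d, #S = t ∧
      ∀ w ∈ S, r - 2 * t ≤ #(G.neighborFinset w ∩ A0) := by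
  have mem_one : ∀ v,
      v ∈ boot2Sets G r t A0 1 ↔ v ∈ A0 ∨ r - 2 * t ≤ #(G.neighborFinset v ∩ A0) := fun v => by
    simp [boot2Sets_one]
  rw [boot2Sets_two, Ne, union_eq_left] at h
  obtain ⟨d, hd, hdA1⟩ := not_subset.1 h
  generalize boot2Sets G r t A0 1 = A1 at mem_one hd hdA1
  have hd : r - t ≤ #(G.neighborFinset d ∩ A1) := (mem_filter.1 hd).2
  have hdA0 : #(G.neighborFinset d ∩ A0) < r - 2 * t := by
    by_contra! hle
    exact hdA1 ((mem_one d).2 (Or.inr hle))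
  have hsplit := card_inter_add_card_sdiff (G.neighborFinset d ∩ A1) A0
  have hA0 : #(G.neighborFinset d ∩ A1 ∩ A0) ≤ #(G.neighborFinset d ∩ A0) :=
    card_le_card (inter_subset_inter_right inter_subset_left)
  obtain ⟨S, hS, hSt⟩ := exists_subset_card_eq (s := (G.neighborFinset d ∩ A1) \ A0) (n := t)
    (by omega)
  refine ⟨d, S, hS.trans (sdiff_subset.trans inter_subset_left), hSt, fun w hw => ?_⟩
  obtain ⟨hwA1, hwA0⟩ := mem_sdiff.1 (hS hw)
  exact ((mem_one w).1 (mem_inter.1 hwA1).2).resolve_left hwA0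

end Bootstrap

section Cube

open scoped symmDiff

variable {n : ℕ}

def diffSet (x y : Fin n → Bool) : Finset (Fin n) := univ.filter fun i => x i ≠ y i

theorem card_diffSet (x y : Fin n → Bool) : #(diffSet x y) = hammingDist x y := rfl

theorem diffSet_left_injective (w : Fin n → Bool) : Function.Injective (diffSet · w) := by
  intro u u' h
  funext i
  have hi := congrArg (i ∈ ·) h
  simp only [diffSet, mem_filter, mem_univ, true_and, eq_iff_iff] at hi
  revert hi
  cases u i <;> cases u' i <;> cases w i <;> simp

theorem diffSet_symmDiff_diffSet (u w w' : Fin n → Bool) :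
    diffSet u w ∆ diffSet u w' = diffSet w w' := by
  ext i
  simp only [diffSet, mem_symmDiff, mem_filter, mem_univ, true_and]
  cases u i <;> cases w i <;> cases w' i <;> simp

theorem card_diffSet_le_of_mem_neighborFinset {k : ℕ} {u w : Fin n → Bool}
    (hu : u ∈ (cubeGraph n k).neighborFinset w) : 1 ≤ #(diffSet u w) ∧ #(diffSet u w) ≤ k := by
  rw [card_diffSet, hammingDist_comm]
  exact (SimpleGraph.mem_neighborFinset _ _ _).1 hu

theorem card_neighborFinset_cubeGraph_two_le (w : Fin n → Bool) :
    #((cubeGraph n 2).neighborFinset w) ≤ n + n.choose 2 := by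
  have hmaps : Set.MapsTo (diffSet · w) ((cubeGraph n 2).neighborFinset w)
      (univ.powersetCard 1 ∪ univ.powersetCard 2 : Finset (Finset (Fin n))) := by
    intro u hu
    have := card_diffSet_le_of_mem_neighborFinset hu
    simp only [coe_union, Set.mem_union, mem_coe, mem_powersetCard_univ]
    omega
  calc #((cubeGraph n 2).neighborFinset w)
      ≤ #(univ.powersetCard 1 ∪ univ.powersetCard 2 : Finset (Finset (Fin n))) :=
        card_le_card_of_injOn _ hmaps (diffSet_left_injective w).injOn
    _ ≤ n + n.choose 2 := by
        refine (card_union_le _ _).trans_eq ?_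
        simp

theorem card_inter_le_one_of_ne {α : Type*} [DecidableEq α] {s t : Finset α} (hs : #s ≤ 2)
    (ht : #t ≤ 2) (hst : s ≠ t) : #(s ∩ t) ≤ 1 := by
  by_contra! h
  exact hst <| (eq_of_subset_of_card_le inter_subset_left (by omega)).symm.trans
    (eq_of_subset_of_card_le inter_subset_right (by omega))

theorem card_neighborFinset_inter_cubeGraph_two_le {w w' : Fin n → Bool} (hww' : w ≠ w') :
    #((cubeGraph n 2).neighborFinset w ∩ (cubeGraph n 2).neighborFinset w') ≤ 16 * (n + 1) := by
  set M := diffSet w w' with hMdef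
  have hM : M ≠ ∅ := by
    rw [Ne, ← card_eq_zero, card_diffSet, hammingDist_eq_zero]
    exact hww'
  have hcommon : ∀ u ∈ (cubeGraph n 2).neighborFinset w ∩ (cubeGraph n 2).neighborFinset w',
      #(diffSet u w) ≤ 2 ∧ #(diffSet u w') ≤ 2 := fun u hu =>
    ⟨(card_diffSet_le_of_mem_neighborFinset (mem_inter.1 hu).1).2,
      (card_diffSet_le_of_mem_neighborFinset (mem_inter.1 hu).2).2⟩
  obtain h | ⟨u₀, hu₀⟩ :=
    ((cubeGraph n 2).neighborFinset w ∩ (cubeGraph n 2).neighborFinset w').eq_empty_or_nonempty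
  · simp [h]
  have hM4 : #M ≤ 4 := by
    rw [hMdef, ← diffSet_symmDiff_diffSet u₀]
    have := hcommon u₀ hu₀
    exact (card_le_card symmDiff_le_sup).trans ((card_union_le _ _).trans (by omega))
  -- `u` is determined by `T = diffSet u w = (T ∩ M) ∪ (T \ M)`, where `#(T \ M) ≤ 1`
  let small : Finset (Finset (Fin n)) := univ.powersetCard 0 ∪ univ.powersetCard 1
  have hmaps : Set.MapsTo (diffSet · w)
      (((cubeGraph n 2).neighborFinset w ∩ (cubeGraph n 2).neighborFinset w' : Finset _) : Set _)
      ((M.powerset ×ˢ small).image fun st => st.1 ∪ st.2) := by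
    intro u hu
    obtain ⟨hT, hT'⟩ := hcommon u hu
    have hout : #(diffSet u w \ M) ≤ 1 := by
      rw [hMdef, ← diffSet_symmDiff_diffSet u w w', sdiff_symmDiff_left]
      refine card_inter_le_one_of_ne hT hT' fun h => hM ?_
      rw [hMdef, ← diffSet_symmDiff_diffSet u w w', h, symmDiff_self, bot_eq_empty]
    simp only [coe_image, Set.mem_image, mem_coe, mem_product, mem_powerset, Prod.exists]
    refine ⟨diffSet u w ∩ M, diffSet u w \ M, ⟨inter_subset_right, ?_⟩, sup_inf_sdiff _ _⟩
    simp only [small, mem_union, mem_powersetCard_univ]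
    omega
  calc #((cubeGraph n 2).neighborFinset w ∩ (cubeGraph n 2).neighborFinset w')
      ≤ #((M.powerset ×ˢ small).image fun st => st.1 ∪ st.2) :=
        card_le_card_of_injOn _ hmaps (diffSet_left_injective w).injOn
    _ ≤ #M.powerset * #small := card_image_le.trans_eq (card_product _ _)
    _ ≤ 2 ^ 4 * (1 + n) := by
        gcongr
        · rw [card_powerset]
          exact Nat.pow_le_pow_right two_pos hM4
        · exact (card_union_le _ _).trans_eq (by simp)
    _ = 16 * (n + 1) := by ring

end Cube

section Estimate

variable {V : Type*} [Fintype V] [DecidableEq V] (G : SimpleGraph V) {p : ℝ}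

theorem sum_sum_card_neighborFinset_inter_le {Δ κ : ℕ} (hΔ : ∀ w, #(G.neighborFinset w) ≤ Δ)
    (hκ : ∀ w w', w ≠ w' → #(G.neighborFinset w ∩ G.neighborFinset w') ≤ κ) (S : Finset V) :
    ∑ w ∈ S, ∑ w' ∈ S, #(G.neighborFinset w ∩ G.neighborFinset w') ≤ #S * (Δ + #S * κ) := by
  rw [← smul_eq_mul, ← sum_const]
  refine sum_le_sum fun w hw => ?_
  rw [← add_sum_erase S _ hw, inter_self]
  gcongr
  · exact hΔ w
  · calc ∑ w' ∈ S.erase w, #(G.neighborFinset w ∩ G.neighborFinset w')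
        ≤ ∑ _w' ∈ S.erase w, κ := sum_le_sum fun w' hw' => hκ w w' (ne_of_mem_erase hw').symm
      _ ≤ #S * κ := by
        rw [sum_const, smul_eq_mul]
        exact Nat.mul_le_mul_right κ (card_erase_le (s := S) (a := w))

theorem probEvent_forall_le_card_neighborFinset_inter_le (h0 : 0 ≤ p) (h1 : p ≤ 1)
    (S : Finset V) {a : ℕ} {D B : ℝ} (hD : 0 < D) (hB : 0 < B)
    (hmean : p * ∑ w ∈ S, (#(G.neighborFinset w) : ℝ) + D ≤ #S * a)
    (hvar : ∑ w ∈ S, ∑ w' ∈ S, (#(G.neighborFinset w ∩ G.neighborFinset w') : ℝ) ≤ B) :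
    probEvent p (fun A => ∀ w ∈ S, a ≤ #(G.neighborFinset w ∩ A))
      ≤ Real.exp (-(2 * D ^ 2 / B)) := by
  let c : V → ℝ := fun u => #(S ∩ G.neighborFinset u)
  have hsum : ∑ u, c u = ∑ w ∈ S, (#(G.neighborFinset w) : ℝ) := by
    have := sum_card_neighborFinset_inter G S univ
    simp only [inter_univ] at this
    simp only [c]
    exact_mod_cast this.symm
  have hsq : ∑ u, c u ^ 2 ≤ B := by
    refine le_of_eq_of_le ?_ hvar
    simp only [c]
    exact_mod_cast sum_card_inter_neighborFinset_sq G S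
  refine (probEvent_mono h0 h1 fun A hA => ?_).trans (probEvent_hoeffding h0 h1 c hD hB hsq)
  rw [hsum]
  refine hmean.trans ?_
  have := sum_card_neighborFinset_inter G S A
  calc (#S : ℝ) * a = ∑ _w ∈ S, (a : ℝ) := by simp
    _ ≤ ∑ w ∈ S, (#(G.neighborFinset w ∩ A) : ℝ) := by gcongr with w hw; exact_mod_cast hA w hw
    _ = ∑ u ∈ A, c u := by simp only [c]; exact_mod_cast this

theorem probEvent_boot2Sets_three_ne_le (h0 : 0 ≤ p) (h1 : p ≤ 1) {r t Δ : ℕ} {b : ℝ}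
    (hΔ : ∀ d, #(G.neighborFinset d) ≤ Δ) (hb0 : 0 ≤ b)
    (hb : ∀ S : Finset V, #S = t →
      probEvent p (fun A => ∀ w ∈ S, r - 2 * t ≤ #(G.neighborFinset w ∩ A)) ≤ b) :
    probEvent p (fun A0 => boot2Sets G r t A0 3 ≠ boot2Sets G r t A0 2)
      ≤ Fintype.card V * (Δ.choose t * b) := by
  calc probEvent p (fun A0 => boot2Sets G r t A0 3 ≠ boot2Sets G r t A0 2)
      ≤ probEvent p (fun A0 => ∃ d ∈ univ, ∃ S ∈ (G.neighborFinset d).powersetCard t,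
          ∀ w ∈ S, r - 2 * t ≤ #(G.neighborFinset w ∩ A0)) := by
        refine probEvent_mono h0 h1 fun A0 h => ?_
        obtain ⟨d, S, hSd, hSt, hS⟩ :=
          exists_subset_neighborFinset_of_boot2Sets_two_ne (boot2Sets_two_ne_one_of_three_ne h)
        exact ⟨d, mem_univ d, S, mem_powersetCard.2 ⟨hSd, hSt⟩, hS⟩
    _ ≤ #(univ : Finset V) * (Δ.choose t * b) := by
        refine probEvent_exists_le_card_mul h0 h1 _ _ fun d _ =>
          (probEvent_exists_le_card_mul h0 h1 _ _ fun S hS =>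
            hb S (mem_powersetCard.1 hS).2).trans ?_
        rw [card_powersetCard]
        gcongr
        exact hΔ d
    _ = Fintype.card V * (Δ.choose t * b) := by rw [card_univ]

end Estimate

section HypercubeEstimate

open Real

variable {n : ℕ}

theorem one_le_log_of_three_le {x : ℝ} (hx : 3 ≤ x) : 1 ≤ log x := by
  rw [le_log_iff_exp_le (by linarith)]
  exact exp_one_lt_d9.le.trans (by linarith)

theorem mul_sqrt_log_div_le_half {x : ℝ} (hx : 40000 ≤ x) : 100 * √(log x) / x ≤ 1 / 2 := by
  have hx0 : 0 < x := by linarith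
  have hlog : √(log x) ≤ √x := sqrt_le_sqrt (log_le_self hx0.le)
  have h200 : 200 ≤ √x := le_sqrt_of_sq_le (by linarith)
  rw [div_le_iff₀ hx0]
  nlinarith [sq_sqrt hx0.le]

theorem cast_add_choose_two (n : ℕ) : ((n + n.choose 2 : ℕ) : ℝ) = n * (n + 1) / 2 := by
  push_cast [Nat.cast_choose_two]
  ring

theorem probEvent_cubeGraph_forall_le_card_neighborFinset_inter_le (hn : 3 ≤ n)
    (hp : 100 * √(log n) / n ≤ 1 / 2) (S : Finset (Fin n → Bool)) (hS : #S = 10 * n) :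
    probEvent (1 / 2 - 100 * √(log n) / n) (fun A => ∀ w ∈ S,
        ⌈((n + n.choose 2 : ℕ) : ℝ) / 2⌉₊ - 2 * (10 * n) ≤ #((cubeGraph n 2).neighborFinset w ∩ A))
      ≤ exp (-(50 * n * log n)) := by
  set N := n + n.choose 2
  set r := ⌈(N : ℝ) / 2⌉₊
  set L := √(log n)
  have hnR : (3 : ℝ) ≤ n := by exact_mod_cast hn
  have hL : 1 ≤ L := one_le_sqrt.2 (one_le_log_of_three_le hnR)
  have hN := cast_add_choose_two n
  have hr : (N : ℝ) / 2 ≤ r := Nat.le_ceil _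
  have hrt : (r : ℝ) - 2 * (10 * n) ≤ ((r - 2 * (10 * n) : ℕ) : ℝ) := by
    rw [sub_le_iff_le_add]
    exact_mod_cast (by omega : r ≤ r - 2 * (10 * n) + 2 * (10 * n))
  have hdeg : ∑ w ∈ S, (#((cubeGraph n 2).neighborFinset w) : ℝ) ≤ 10 * n * N := by
    calc ∑ w ∈ S, (#((cubeGraph n 2).neighborFinset w) : ℝ) ≤ ∑ _w ∈ S, (N : ℝ) := by
          gcongr with w; exact_mod_cast card_neighborFinset_cubeGraph_two_le w
      _ = 10 * n * N := by simp [hS]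
  have hcodeg := sum_sum_card_neighborFinset_inter_le (cubeGraph n 2)
    card_neighborFinset_cubeGraph_two_le (fun _ _ => card_neighborFinset_inter_cubeGraph_two_le) S
  -- Hoeffding with `D = 300 n² L`, which is below the gap `ε t N - 2 t²` between `t (r - 2t)` and
  -- the mean `p t N`, and with `B = 3600 n³ ≥ t (N + 16 t (n + 1))`
  have hexp : 2 * (300 * n ^ 2 * L) ^ 2 / (3600 * n ^ 3) = 50 * n * log n := by
    rw [mul_pow, sq_sqrt (by linarith [one_le_log_of_three_le hnR])]
    field_simp
    ring
  rw [← hexp]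
  have hε : 0 ≤ 100 * L / n := by positivity
  refine probEvent_forall_le_card_neighborFinset_inter_le _ (by linarith) (by linarith) S
    (by positivity) (by positivity) ?_ ?_
  · have hεN : 100 * L / n * (10 * n * N) = 1000 * L * N := by field_simp; ring
    rw [hS]
    calc (1 / 2 - 100 * L / n) * ∑ w ∈ S, (#((cubeGraph n 2).neighborFinset w) : ℝ)
          + 300 * n ^ 2 * L
        ≤ (1 / 2 - 100 * L / n) * (10 * n * N) + 300 * n ^ 2 * L := by
          gcongr
      _ ≤ ((10 * n : ℕ) : ℝ) * (r - 2 * (10 * n)) := by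
          push_cast
          nlinarith
      _ ≤ ((10 * n : ℕ) : ℝ) * ((r - 2 * (10 * n) : ℕ) : ℝ) := by gcongr
  · calc ∑ w ∈ S, ∑ w' ∈ S,
          (#((cubeGraph n 2).neighborFinset w ∩ (cubeGraph n 2).neighborFinset w') : ℝ)
        ≤ ((#S * (N + #S * (16 * (n + 1))) : ℕ) : ℝ) := by exact_mod_cast hcodeg
      _ ≤ 3600 * n ^ 3 := by
          rw [hS]
          push_cast
          nlinarith

theorem card_mul_choose_le_pow (hn : 2 ≤ n) :
    Fintype.card (Fin n → Bool) * (n + n.choose 2).choose (10 * n) ≤ n ^ (21 * n) := by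
  have hN : n + n.choose 2 ≤ n ^ 2 := by
    have h := cast_add_choose_two n
    have hnR : (2 : ℝ) ≤ n := by exact_mod_cast hn
    have : ((n + n.choose 2 : ℕ) : ℝ) ≤ ((n ^ 2 : ℕ) : ℝ) := by rw [h]; push_cast; nlinarith
    exact_mod_cast this
  calc Fintype.card (Fin n → Bool) * (n + n.choose 2).choose (10 * n)
      ≤ n ^ n * (n ^ 2) ^ (10 * n) := by
        simp only [Fintype.card_fun, Fintype.card_bool, Fintype.card_fin]
        exact Nat.mul_le_mul (Nat.pow_le_pow_left hn n)
          ((Nat.choose_le_pow _ _).trans (Nat.pow_le_pow_left hN _))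
    _ = n ^ (21 * n) := by ring

theorem probEvent_cubeGraph_boot2Sets_three_ne_le (hn : 3 ≤ n)
    (hp : 100 * √(log n) / n ≤ 1 / 2) :
    probEvent (1 / 2 - 100 * √(log n) / n) (fun A0 : Finset (Fin n → Bool) =>
        boot2Sets (cubeGraph n 2) ⌈((n + n.choose 2 : ℕ) : ℝ) / 2⌉₊ (10 * n) A0 3 ≠
          boot2Sets (cubeGraph n 2) ⌈((n + n.choose 2 : ℕ) : ℝ) / 2⌉₊ (10 * n) A0 2)
      ≤ exp (-n) := by
  have hnR : (3 : ℝ) ≤ n := by exact_mod_cast hn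
  have hlog := one_le_log_of_three_le hnR
  have hε : 0 ≤ 100 * √(log n) / n := by positivity
  refine (probEvent_boot2Sets_three_ne_le _ (by linarith) (by linarith)
    card_neighborFinset_cubeGraph_two_le (exp_nonneg _)
    (probEvent_cubeGraph_forall_le_card_neighborFinset_inter_le hn hp)).trans ?_
  have hcount : (Fintype.card (Fin n → Bool) : ℝ) * (n + n.choose 2).choose (10 * n)
      ≤ exp (21 * n * log n) := by
    have hpow : ((n ^ (21 * n) : ℕ) : ℝ) = exp (21 * n * log n) := by
      rw [← exp_log (by positivity : (0 : ℝ) < ((n ^ (21 * n) : ℕ) : ℝ)), Nat.cast_pow, log_pow]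
      push_cast
      ring_nf
    rw [← hpow]
    exact_mod_cast card_mul_choose_le_pow (by omega)
  calc (Fintype.card (Fin n → Bool) : ℝ)
        * ((n + n.choose 2).choose (10 * n) * exp (-(50 * n * log n)))
      ≤ exp (21 * n * log n) * exp (-(50 * n * log n)) := by
        rw [← mul_assoc]; gcongr
    _ ≤ exp (-n) := by
        rw [← exp_add, exp_le_exp]
        nlinarith

end HypercubeEstimate

/-- There is a constant `C > 0` such that in the process `Boot3(t)`
(implemented by `boot2Sets`, which has the same update rule) on `Q_{2,n}` with base threshold
`⌈N/2⌉` (where `N = n + C(n,2)`), `t = 10n` and initial infection probability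
`p = 1/2 - C√(log n)/n`, we have `P(A_3 = A_2) → 1` as `n → ∞`. -/
theorem boot3_stabilizes_Q2n :
    ∃ C : ℝ, 0 < C ∧
      Filter.Tendsto
        (fun n : ℕ =>
          probEvent (1 / 2 - C * Real.sqrt (Real.log (n : ℝ)) / (n : ℝ))
            (fun A0 : Finset (Fin n → Bool) =>
              boot2Sets (cubeGraph n 2) ⌈((n + n.choose 2 : ℕ) : ℝ) / 2⌉₊ (10 * n) A0 3 =
                boot2Sets (cubeGraph n 2) ⌈((n + n.choose 2 : ℕ) : ℝ) / 2⌉₊ (10 * n) A0 2))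
        Filter.atTop (nhds 1) := by
  refine ⟨100, by norm_num, ?_⟩
  have hlarge : ∀ᶠ n : ℕ in atTop, 3 ≤ n ∧ 100 * √(Real.log n) / n ≤ 1 / 2 :=
    (eventually_ge_atTop 40000).mono fun n hn =>
      ⟨by omega, mul_sqrt_log_div_le_half (by exact_mod_cast hn)⟩
  have hfail : Tendsto (fun n : ℕ => probEvent (1 / 2 - 100 * √(Real.log n) / n)
      (fun A0 : Finset (Fin n → Bool) =>
        boot2Sets (cubeGraph n 2) ⌈((n + n.choose 2 : ℕ) : ℝ) / 2⌉₊ (10 * n) A0 3 ≠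
          boot2Sets (cubeGraph n 2) ⌈((n + n.choose 2 : ℕ) : ℝ) / 2⌉₊ (10 * n) A0 2))
      atTop (nhds 0) := by
    refine squeeze_zero' (hlarge.mono fun n hn => probEvent_nonneg ?_ ?_ _)
      (hlarge.mono fun n hn => probEvent_cubeGraph_boot2Sets_three_ne_le hn.1 hn.2)
      (Real.tendsto_exp_neg_atTop_nhds_zero.comp tendsto_natCast_atTop_atTop)
    · linarith [hn.2]
    · have : 0 ≤ 100 * √(Real.log n) / n := by positivity
      linarith
  simpa [probEvent_not] using (tendsto_const_nhds (x := (1 : ℝ))).sub hfail
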